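/- Let n ≥ 3 and let I be a nonempty proper nested subset of [n]. If D_I = {δ_2, δ_3, δ_4} (i.e. exactly δ_2, δ_3 and δ_4 among the four diagonals are proper), then I ⊆ U, there is 1 ≤ r < ℓ such that every element of I lies strictly between the consecutive down elements d_r and d_{r+1}, and, writing min I = u_s and max I = u_t in the enumeration U = {u_1 < ⋯ < u_m}, one has t ≥ s + 2 (equivalently, |{u ∈ U : min I ≤ u ≤ max I}| ≥ 3). -/

import Mathlib

open Finset

attribute [local instance] Classical.propDecidable

namespace AssocPaper

/-- `x` and `y` are consecutive elements of the finite set `S`. -/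
def ConsecIn (S : Finset ℕ) (x y : ℕ) : Prop :=
  x ∈ S ∧ y ∈ S ∧ x < y ∧ ∀ z ∈ S, ¬ (x < z ∧ z < y)

/-- `D̄ = D ∪ {0, n+1}`. -/
def Dbar (n : ℕ) (D : Finset ℕ) : Finset ℕ := insert 0 (insert (n + 1) D)

/-- The boundary edges of the `c`-labeled `(n+2)`-gon, given by endpoints `x < y`:
pairs of consecutive elements of `D̄`; if `U ≠ ∅` also `{0, min U}`, `{max U, n+1}` and
pairs of consecutive elements of `U`; if `U = ∅` also `{0, n+1}`. -/
def IsBoundary (n : ℕ) (D U : Finset ℕ) (x y : ℕ) : Prop :=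
  ConsecIn (Dbar n D) x y
    ∨ (U.Nonempty ∧
        ((x = 0 ∧ y ∈ U ∧ ∀ u ∈ U, y ≤ u)
          ∨ (y = n + 1 ∧ x ∈ U ∧ ∀ u ∈ U, u ≤ x)
          ∨ ConsecIn U x y))
    ∨ (U = ∅ ∧ x = 0 ∧ y = n + 1)

/-- `{x, y}` (with `x < y ≤ n+1`) is a proper diagonal: a diagonal of the
`(n+2)`-gon which is not a boundary edge. -/
def IsProper (n : ℕ) (D U : Finset ℕ) (x y : ℕ) : Prop :=
  x < y ∧ y ≤ n + 1 ∧ ¬ IsBoundary n D U x y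

/-- The set `R_δ` for a proper diagonal `δ = {x,y}` with `x < y`. -/
noncomputable def Rdiag (n : ℕ) (D U : Finset ℕ) (x y : ℕ) : Finset ℕ :=
  if x ∈ U then
    (if y ∈ U then (D ∪ U.filter fun u => u ≤ x) ∪ U.filter fun u => y ≤ u
     else D.filter (fun d => d < y) ∪ U.filter fun u => u ≤ x)
  else
    (if y ∈ U then D.filter (fun d => x < d) ∪ U.filter fun u => y ≤ u
     else D.filter fun d => x < d ∧ d < y)

/-- The extension of `R` to non-proper and degenerate diagonals `δ = {x,y}`, `x ≤ y`:
`R_δ = [n]` if `U = ∅` and `δ = {0,n+1}`; for other non-proper or degenerate `δ`,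
`R_δ = ∅` if `x,y ∈ D̄` and `R_δ = [n]` otherwise. -/
noncomputable def Rext (n : ℕ) (D U : Finset ℕ) (x y : ℕ) : Finset ℕ :=
  if IsProper n D U x y then Rdiag n D U x y
  else if U = ∅ ∧ x = 0 ∧ y = n + 1 then Finset.Icc 1 n
  else if x ∈ U ∨ y ∈ U then Finset.Icc 1 n
  else ∅

/-- The extension of the right-hand sides `z_{R_δ}` to non-proper and degenerate
diagonals, given the values `w` on proper diagonals and the value `zn = z_{[n]}`. -/
noncomputable def zext (n : ℕ) (D U : Finset ℕ) (w : ℕ × ℕ → ℝ) (zn : ℝ) (x y : ℕ) : ℝ :=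
  if IsProper n D U x y then w (x, y)
  else if U = ∅ ∧ x = 0 ∧ y = n + 1 then zn
  else if x ∈ U ∨ y ∈ U then zn
  else 0

/-- `a(I)`: the largest element of `D ∪ {0}` smaller than `min I`. -/
noncomputable def aI (D I : Finset ℕ) : ℕ :=
  ((insert 0 D).filter fun e => ∀ i ∈ I, e < i).sup id

/-- `b(I)`: the smallest element of `D ∪ {n+1}` larger than `max I`. -/
noncomputable def bI (n : ℕ) (D I : Finset ℕ) : ℕ :=
  sInf {e : ℕ | e ∈ insert (n + 1) D ∧ ∀ i ∈ I, i < e}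

/-- The minimum element `γ` of `I` (junk value for `I = ∅`). -/
noncomputable def minEl (I : Finset ℕ) : ℕ := sInf {i : ℕ | i ∈ I}

/-- The maximum element `Γ` of `I` (junk value `0` for `I = ∅`). -/
noncomputable def maxEl (I : Finset ℕ) : ℕ := I.sup id

/-- A nonempty `I ⊆ [n]` is nested if every `d ∈ D` with `a(I) < d < b(I)` lies in `I`. -/
def IsNested (n : ℕ) (D I : Finset ℕ) : Prop :=
  I.Nonempty ∧ I ⊆ Finset.Icc 1 n ∧
    ∀ d ∈ D, aI D I < d → d < bI n D I → d ∈ I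

/-- The nested components of `I`: the inclusion-maximal nested subsets of `I`. -/
noncomputable def nestedComponents (n : ℕ) (D I : Finset ℕ) : Finset (Finset ℕ) :=
  I.powerset.filter fun J =>
    IsNested n D J ∧ ∀ K ∈ I.powerset, IsNested n D K → J ⊆ K → J = K

/-- `v(I)`: the number of nested components of `I`. -/
noncomputable def vI (n : ℕ) (D I : Finset ℕ) : ℕ := (nestedComponents n D I).card

/-- `x` is the last element of one of the up intervals of `J`
(an element of `J ∩ U` whose successor in `U`, if any, is not in `J`). -/
def IsRunEnd (U J : Finset ℕ) (x : ℕ) : Prop :=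
  x ∈ J ∧ x ∈ U ∧ ∀ y, ConsecIn U x y → y ∉ J

/-- `y` is the first element of one of the up intervals of `J`
(an element of `J ∩ U` whose predecessor in `U`, if any, is not in `J`). -/
def IsRunStart (U J : Finset ℕ) (y : ℕ) : Prop :=
  y ∈ J ∧ y ∈ U ∧ ∀ x, ConsecIn U x y → x ∉ J

/-- `{x,y}` is one of the diagonals `δ_1(J), …, δ_{w+1}(J)` associated to a nested
set `J` with `a = a(J)`, `b = b(J)` and up intervals `[α_1,β_1]_U, …, [α_w,β_w]_U`,
namely `{a,α_1}, {β_1,α_2}, …, {β_w,b}` (and `{a,b}` when `w = 0`). -/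
def AssocDiag (n : ℕ) (D U J : Finset ℕ) (x y : ℕ) : Prop :=
  x < y ∧ (x = aI D J ∨ IsRunEnd U J x) ∧ (y = bI n D J ∨ IsRunStart U J y) ∧
    ∀ u ∈ J ∩ U, ¬ (x < u ∧ u < y)

/-- `W(J)`: the proper diagonals among the diagonals associated to the nested set `J`. -/
noncomputable def WJ (n : ℕ) (D U J : Finset ℕ) : Finset (ℕ × ℕ) :=
  (Finset.range (n + 2) ×ˢ Finset.range (n + 2)).filter fun p =>
    AssocDiag n D U J p.1 p.2 ∧ IsProper n D U p.1 p.2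

/-- The tight value `z^c_I = ∑_i ( ∑_{j ∈ W(J_i)} w_{δ_j(J_i)} − (|W(J_i)|−1)·z_{[n]} )`,
the sum running over the nested components `J_i` of `I` (so `z^c_∅ = 0`). -/
noncomputable def zc (n : ℕ) (D U : Finset ℕ) (w : ℕ × ℕ → ℝ) (zn : ℝ) (I : Finset ℕ) : ℝ :=
  ∑ J ∈ nestedComponents n D I,
    ((∑ p ∈ WJ n D U J, w p) - (((WJ n D U J).card : ℝ) - 1) * zn)

/-- The Minkowski coefficient `y_I = ∑_{J ⊆ I} (−1)^{|I∖J|} z^c_J`. -/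
noncomputable def yI (n : ℕ) (D U : Finset ℕ) (w : ℕ × ℕ → ℝ) (zn : ℝ) (I : Finset ℕ) : ℝ :=
  ∑ J ∈ I.powerset, (-1 : ℝ) ^ (I \ J).card * zc n D U w zn J

/-- The associahedron right-hand sides `w_δ = |R_δ|·(|R_δ|+1)/2`. -/
noncomputable def wAs (n : ℕ) (D U : Finset ℕ) (p : ℕ × ℕ) : ℝ :=
  (((Rdiag n D U p.1 p.2).card : ℝ) * (((Rdiag n D U p.1 p.2).card : ℝ) + 1)) / 2

/-- The associahedron value `z_{[n]} = n(n+1)/2`. -/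
noncomputable def znAs (n : ℕ) : ℝ := ((n : ℝ) * ((n : ℝ) + 1)) / 2

/-!
`δ_1 = {a(I), b(I)}` has both ends in `D̄`, so as a non-proper diagonal it is a side of
the `D̄`-part of the polygon: `a(I)` and `b(I)` are consecutive in `D̄` (the remaining
case `U = ∅`, `δ_1 = {0, n+1}` would make `I = [n]` by nestedness). Hence no down
element lies in `I`, i.e. `I ⊆ U`; as `1, n ∈ D` this keeps `a(I)` and `b(I)` inside `D`.
Finally `δ_4 = {min I, max I}` joins two up elements and is proper, so they are not
consecutive in `U` and a third up element lies between them.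
-/

lemma ConsecIn.of_subset {S T : Finset ℕ} {x y : ℕ} (h : ConsecIn S x y) (hTS : T ⊆ S)
    (hx : x ∈ T) (hy : y ∈ T) : ConsecIn T x y :=
  ⟨hx, hy, h.2.2.1, fun z hz => h.2.2.2 z (hTS hz)⟩

lemma three_le_card_filter_of_not_consecIn {U : Finset ℕ} {x y : ℕ} (hx : x ∈ U) (hy : y ∈ U)
    (hxy : x < y) (h : ¬ ConsecIn U x y) : 3 ≤ (U.filter fun u => x ≤ u ∧ u ≤ y).card := by
  obtain ⟨z, hz, hxz, hzy⟩ : ∃ z ∈ U, x < z ∧ z < y := by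
    by_contra! hno
    exact h ⟨hx, hy, hxy, fun z hz ⟨hxz, hzy⟩ => (hno z hz hxz).not_gt hzy⟩
  calc 3 = ({x, z, y} : Finset ℕ).card := by
        rw [card_insert_of_notMem (by simp; omega), card_pair hzy.ne]
    _ ≤ _ := card_le_card <| by
        simp only [insert_subset_iff, singleton_subset_iff, mem_filter]
        exact ⟨⟨hx, le_rfl, hxy.le⟩, ⟨hz, hxz.le, hzy.le⟩, ⟨hy, hxy.le, le_rfl⟩⟩

section Extremes

variable {I : Finset ℕ}

lemma minEl_mem (h : I.Nonempty) : minEl I ∈ I :=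
  Nat.sInf_mem (s := {i | i ∈ I}) h

lemma maxEl_mem (h : I.Nonempty) : maxEl I ∈ I := by
  obtain ⟨i, hi, hmax⟩ := exists_mem_eq_sup I h id
  rw [maxEl, hmax]
  exact hi

variable (D : Finset ℕ)

lemma aI_spec (hpos : ∀ i ∈ I, 0 < i) : aI D I ∈ insert 0 D ∧ ∀ i ∈ I, aI D I < i := by
  have h0 : 0 ∈ (insert 0 D).filter fun e => ∀ i ∈ I, e < i :=
    mem_filter.2 ⟨mem_insert_self 0 D, hpos⟩
  obtain ⟨e, he, hsup⟩ := exists_mem_eq_sup _ ⟨0, h0⟩ id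
  rw [aI, hsup]
  exact mem_filter.1 he

lemma le_aI {d : ℕ} (hd : d ∈ insert 0 D) (hlt : ∀ i ∈ I, d < i) : d ≤ aI D I :=
  le_sup (f := id) (mem_filter.2 ⟨hd, hlt⟩)

lemma aI_mem_of_lt {d : ℕ} (hd : d ∈ D) (hlt : ∀ i ∈ I, d < i) : aI D I ∈ D := by
  have hpos : ∀ i ∈ I, 0 < i := fun i hi => (Nat.zero_le d).trans_lt (hlt i hi)
  rcases mem_insert.1 (aI_spec D hpos).1 with h0 | hD
  · have hd0 : d = 0 := Nat.le_zero.1 (h0 ▸ le_aI D (mem_insert_of_mem hd) hlt)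
    rwa [h0, ← hd0]
  · exact hD

variable (n : ℕ)

lemma bI_spec (hlt : ∀ i ∈ I, i < n + 1) :
    bI n D I ∈ insert (n + 1) D ∧ ∀ i ∈ I, i < bI n D I :=
  Nat.sInf_mem (s := {e | e ∈ insert (n + 1) D ∧ ∀ i ∈ I, i < e})
    ⟨n + 1, mem_insert_self _ _, hlt⟩

lemma bI_le {e : ℕ} (he : e ∈ insert (n + 1) D) (hlt : ∀ i ∈ I, i < e) : bI n D I ≤ e :=
  Nat.sInf_le ⟨he, hlt⟩

lemma bI_mem_of_lt {d : ℕ} (hd : d ∈ D) (hdn : d ≤ n + 1) (hlt : ∀ i ∈ I, i < d) :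
    bI n D I ∈ D := by
  rcases mem_insert.1 (bI_spec D n fun i hi => (hlt i hi).trans_le hdn).1 with hb | hD
  · have hdb : d = n + 1 := le_antisymm hdn (hb ▸ bI_le D n (mem_insert_of_mem hd) hlt)
    rwa [hb, ← hdb]
  · exact hD

end Extremes

section Polygon

variable {n : ℕ} {D U : Finset ℕ}

lemma subset_dbar : D ⊆ Dbar n D :=
  (subset_insert _ _).trans (subset_insert _ _)

lemma notMem_of_mem_dbar (hU : U ⊆ Icc 1 n) (hdisj : Disjoint D U) {x : ℕ}
    (hx : x ∈ Dbar n D) : x ∉ U := by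
  intro hxU
  have hx' := mem_Icc.1 (hU hxU)
  rcases mem_insert.1 hx with rfl | hx
  · omega
  rcases mem_insert.1 hx with rfl | hx
  · omega
  · exact disjoint_left.1 hdisj hx hxU

lemma IsBoundary.of_consecIn_up {x y : ℕ} (h : ConsecIn U x y) : IsBoundary n D U x y :=
  Or.inr (Or.inl ⟨⟨x, h.1⟩, Or.inr (Or.inr h)⟩)

lemma IsBoundary.consecIn_dbar {x y : ℕ} (h : IsBoundary n D U x y) (hx : x ∉ U) (hy : y ∉ U)
    (hext : ¬ (U = ∅ ∧ x = 0 ∧ y = n + 1)) : ConsecIn (Dbar n D) x y := by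
  rcases h with h | ⟨_, h | h | h⟩ | h
  · exact h
  · exact absurd h.2.1 hy
  · exact absurd h.2.1 hx
  · exact absurd h.1 hx
  · exact absurd h hext

lemma IsNested.eq_Icc {I : Finset ℕ} (hnested : IsNested n D I) (hD : Icc 1 n ⊆ D)
    (ha : aI D I = 0) (hb : bI n D I = n + 1) : I = Icc 1 n := by
  refine hnested.2.1.antisymm fun d hd => ?_
  have := mem_Icc.1 hd
  exact hnested.2.2 d (hD hd) (by omega) (by omega)

lemma consecIn_dbar_aI_bI (hDU : D ∪ U = Icc 1 n) (hdisj : Disjoint D U) {I : Finset ℕ}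
    (hnested : IsNested n D I) (hI_ne : I ≠ Icc 1 n)
    (h1 : ¬ IsProper n D U (aI D I) (bI n D I)) :
    ConsecIn (Dbar n D) (aI D I) (bI n D I) := by
  obtain ⟨i, hi⟩ := hnested.1
  have hsub := hnested.2.1
  have hU : U ⊆ Icc 1 n := hDU ▸ subset_union_right
  have hlt_succ : ∀ i ∈ I, i < n + 1 := fun i hi => Nat.lt_succ_of_le (mem_Icc.1 (hsub hi)).2
  obtain ⟨haD, ha_lt⟩ := aI_spec D fun i hi => (mem_Icc.1 (hsub hi)).1
  obtain ⟨hbD, hlt_b⟩ := bI_spec D n hlt_succ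
  have haU : aI D I ∉ U := notMem_of_mem_dbar hU hdisj <| by
    rcases mem_insert.1 haD with h | h <;> simp [Dbar, h]
  have hbU : bI n D I ∉ U := notMem_of_mem_dbar hU hdisj <| by
    rcases mem_insert.1 hbD with h | h <;> simp [Dbar, h]
  have hδ1 : IsBoundary n D U (aI D I) (bI n D I) := by
    by_contra h
    exact h1 ⟨(ha_lt i hi).trans (hlt_b i hi), bI_le D n (mem_insert_self _ _) hlt_succ, h⟩
  exact hδ1.consecIn_dbar haU hbU fun ⟨hU0, ha0, hb0⟩ =>
    hI_ne (hnested.eq_Icc (by rw [← hDU, hU0, union_empty]) ha0 hb0)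

end Polygon

theorem statement19_general (n : ℕ) (D U : Finset ℕ)
    (hDU : D ∪ U = Finset.Icc 1 n) (hdisj : Disjoint D U) (h1D : 1 ∈ D) (hnD : n ∈ D)
    (I : Finset ℕ) (hne : I.Nonempty) (hsub : I ⊆ Finset.Icc 1 n)
    (hpropersub : I ≠ Finset.Icc 1 n) (hnested : IsNested n D I)
    (h1 : ¬ IsProper n D U (aI D I) (bI n D I))
    (h4 : IsProper n D U (minEl I) (maxEl I)) :
    I ⊆ U
    ∧ (∃ d d', ConsecIn D d d' ∧ ∀ i ∈ I, d < i ∧ i < d')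
    ∧ 3 ≤ (U.filter fun u => minEl I ≤ u ∧ u ≤ maxEl I).card := by
  have hI : ∀ i ∈ I, 1 ≤ i ∧ i ≤ n := fun i hi => mem_Icc.1 (hsub hi)
  have hcons := consecIn_dbar_aI_bI hDU hdisj hnested hpropersub h1
  have ha_lt := (aI_spec D fun i hi => (hI i hi).1).2
  have hlt_b := (bI_spec D n fun i hi => Nat.lt_succ_of_le (hI i hi).2).2
  have hIU : I ⊆ U := fun i hi => (mem_union.1 (hDU ▸ hsub hi)).resolve_left fun hiD =>
    hcons.2.2.2 i (subset_dbar hiD) ⟨ha_lt i hi, hlt_b i hi⟩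
  have h1_lt : ∀ i ∈ I, 1 < i := fun i hi =>
    (hI i hi).1.lt_of_ne fun h => disjoint_left.1 hdisj (h ▸ h1D) (hIU hi)
  have hlt_n : ∀ i ∈ I, i < n := fun i hi =>
    (hI i hi).2.lt_of_ne fun h => disjoint_left.1 hdisj (h ▸ hnD) (hIU hi)
  refine ⟨hIU, ⟨aI D I, bI n D I, ?_, fun i hi => ⟨ha_lt i hi, hlt_b i hi⟩⟩, ?_⟩
  · exact hcons.of_subset subset_dbar (aI_mem_of_lt D h1D h1_lt)
      (bI_mem_of_lt D n hnD n.le_succ hlt_n)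
  · exact three_le_card_filter_of_not_consecIn (hIU (minEl_mem hne)) (hIU (maxEl_mem hne)) h4.1
      fun h => h4.2.2 (IsBoundary.of_consecIn_up h)

/-- for `n ≥ 3` and a nonempty proper nested `I ⊆ [n]`, if among
`δ_1, δ_2, δ_3, δ_4` exactly `δ_2`, `δ_3` and `δ_4` are proper, then `I ⊆ U`,
all elements of `I` lie strictly between some pair of consecutive elements of `D`,
and `|{u ∈ U : min I ≤ u ≤ max I}| ≥ 3` (i.e. `t ≥ s + 2`). -/
theorem statement19 (n : ℕ) (D U : Finset ℕ) (hn : 3 ≤ n)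
    (hDU : D ∪ U = Finset.Icc 1 n) (hdisj : Disjoint D U) (h1D : 1 ∈ D) (hnD : n ∈ D)
    (I : Finset ℕ) (hne : I.Nonempty) (hsub : I ⊆ Finset.Icc 1 n)
    (hpropersub : I ≠ Finset.Icc 1 n) (hnested : IsNested n D I)
    (h1 : ¬ IsProper n D U (aI D I) (bI n D I))
    (h2 : IsProper n D U (aI D I) (maxEl I))
    (h3 : IsProper n D U (minEl I) (bI n D I))
    (h4 : IsProper n D U (minEl I) (maxEl I)) :
    I ⊆ U
    ∧ (∃ d d', ConsecIn D d d' ∧ ∀ i ∈ I, d < i ∧ i < d')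
    ∧ 3 ≤ (U.filter fun u => minEl I ≤ u ∧ u ≤ maxEl I).card :=
  statement19_general n D U hDU hdisj h1D hnD I hne hsub hpropersub hnested h1 h4

end AssocPaper
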